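/- arXiv:1511.08595 — 2 statements merged into one kernel-verified Lean document; each statement's English description precedes it below -/
import Mathlib

section
/- Let ξ : ℤ → {0,1} be a non-periodic Toeplitz sequence with period structure (p_ℓ)_{ℓ≥1}, Ω the associated odometer, and W = cl(U) the window constructed from ξ. Then W is compact, the interior of W equals U, and consequently W = cl(int(W)), i.e. W is a proper window. -/
open MeasureTheory Set Filter Topology

noncomputable section

instance (n : ℕ) : TopologicalSpace (ZMod n) := ⊥
instance (n : ℕ) : DiscreteTopology (ZMod n) := ⟨rfl⟩
instance (n : ℕ) : MeasurableSpace (ZMod n) := ⊤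

/-- The `p`-skeleton of a sequence `ξ : ℤ → {0,1}`:
the set of `p`-periodic positions of `ξ`. -/
def Per (ξ : ℤ → Fin 2) (p : ℕ) : Set ℤ := {k | ∀ n : ℤ, ξ (k + n * p) = ξ k}

/-- The density `D(p)` of the `p`-skeleton:
`D(p) = #(Per(p,ξ) ∩ [0, p-1]) / p`. -/
def skelDensity (ξ : ℤ → Fin 2) (p : ℕ) : ℝ :=
  ((Per ξ p ∩ Set.Ico (0 : ℤ) (p : ℤ)).ncard : ℝ) / p

/-- `ξ` is a Toeplitz sequence: every position is periodic for some period `p ≥ 1`. -/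
def IsToeplitz (ξ : ℤ → Fin 2) : Prop := ∀ k : ℤ, ∃ p : ℕ, 0 < p ∧ k ∈ Per ξ p

/-- `ξ` is non-periodic: no `p ≥ 1` is a period of the whole sequence. -/
def IsNonPeriodic (ξ : ℤ → Fin 2) : Prop := ∀ p : ℕ, 0 < p → ∃ k : ℤ, ξ (k + p) ≠ ξ k

/-- `(p ℓ)` is a period structure for `ξ`: the `p ℓ` are positive, each divides the
next, and the `p ℓ`-skeletons exhaust `ℤ`. -/
def IsPeriodStructure (ξ : ℤ → Fin 2) (p : ℕ → ℕ) : Prop :=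
  (∀ ℓ, 0 < p ℓ) ∧ (∀ ℓ, p ℓ ∣ p (ℓ + 1)) ∧ ∀ k : ℤ, ∃ ℓ, k ∈ Per ξ (p ℓ)

/-- The odometer associated with a scale `p`, i.e. the closed subgroup of
`∏ ℓ, ℤ/p ℓ ℤ` of sequences compatible under the canonical projections
(whenever `p ℓ ∣ p (ℓ+1)`, which holds for period structures). -/
def odometer (p : ℕ → ℕ) : AddSubgroup (Π ℓ, ZMod (p ℓ)) where
  carrier := {x | ∀ ℓ, ∀ h : p ℓ ∣ p (ℓ + 1), ZMod.castHom h (ZMod (p ℓ)) (x (ℓ + 1)) = x ℓ}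
  zero_mem' := by intro ℓ _; simp
  add_mem' := by intro a b ha hb ℓ h; simp only [Pi.add_apply, map_add, ha ℓ h, hb ℓ h]
  neg_mem' := by intro a ha ℓ h; simp only [Pi.neg_apply, map_neg, ha ℓ h]

/-- The distinguished element `e` of the odometer, whose `ℓ`-th coordinate is
`1 mod p ℓ`; its `n`-th multiple `n • e` has `ℓ`-th coordinate `n mod p ℓ`. -/
def odometerGen (p : ℕ → ℕ) : odometer p := ⟨fun _ => 1, fun _ _ => map_one _⟩

/-- `A_s(ℓ) = {k mod p ℓ : k ∈ Per (p ℓ, ξ), ξ k = s} ⊆ ℤ/p ℓ ℤ`. -/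
def Aset (ξ : ℤ → Fin 2) (p : ℕ → ℕ) (ℓ : ℕ) (s : Fin 2) : Set (ZMod (p ℓ)) :=
  {c | ∃ k : ℤ, k ∈ Per ξ (p ℓ) ∧ ξ k = s ∧ (k : ZMod (p ℓ)) = c}

/-- `U_ℓ = {x ∈ Ω : x ℓ ∈ A_1(ℓ)}`. -/
def UsetL (ξ : ℤ → Fin 2) (p : ℕ → ℕ) (ℓ : ℕ) : Set (odometer p) :=
  {x | (x : Π ℓ, ZMod (p ℓ)) ℓ ∈ Aset ξ p ℓ 1}

/-- `V_ℓ = {x ∈ Ω : x ℓ ∈ A_0(ℓ)}`. -/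
def VsetL (ξ : ℤ → Fin 2) (p : ℕ → ℕ) (ℓ : ℕ) : Set (odometer p) :=
  {x | (x : Π ℓ, ZMod (p ℓ)) ℓ ∈ Aset ξ p ℓ 0}

/-- `U = ⋃ ℓ, U_ℓ`. -/
def Uset (ξ : ℤ → Fin 2) (p : ℕ → ℕ) : Set (odometer p) := ⋃ ℓ, UsetL ξ p ℓ

/-- `V = ⋃ ℓ, V_ℓ`. -/
def Vset (ξ : ℤ → Fin 2) (p : ℕ → ℕ) : Set (odometer p) := ⋃ ℓ, VsetL ξ p ℓ

/-- The window `W = cl(U)` constructed from `ξ`. -/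
def Wset (ξ : ℤ → Fin 2) (p : ℕ → ℕ) : Set (odometer p) := closure (Uset ξ p)

/-!
`U` and `V` are open, and they are disjoint because the coordinates of a point of the odometer
are compatible and `ξ` is `p ℓ`-periodic on the `p ℓ`-skeleton; hence `W = cl U` misses `V`.
An open subset of `W` contains a cylinder `{y | y m = c}`. Each orbit point `k • e` in it has
`ξ k = 1`, since otherwise `k • e ∈ V` (the skeletons exhaust `ℤ`); so `ξ` is constantly `1` on
the residue class `c mod p m`, which therefore lies in `A_1(m)`, and the cylinder lies in `U_m`.
Compactness is inherited from the product of the finite groups `ℤ/p ℓ ℤ`.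
-/

lemma Per.apply_eq_of_intCast_eq {ξ : ℤ → Fin 2} {q : ℕ} {k k' : ℤ} (hk : k ∈ Per ξ q)
    (h : (k' : ZMod q) = k) : ξ k' = ξ k := by
  obtain ⟨n, hn⟩ := (ZMod.intCast_eq_intCast_iff_dvd_sub k k' q).mp h.symm
  rw [show k' = k + n * q by linarith]
  exact hk n

lemma Per.of_forall_intCast_eq {ξ : ℤ → Fin 2} {q : ℕ} {c : ZMod q} {s : Fin 2}
    (hs : ∀ k : ℤ, (k : ZMod q) = c → ξ k = s) {k₀ : ℤ} (hk₀ : (k₀ : ZMod q) = c) :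
    k₀ ∈ Per ξ q := by
  intro n
  rw [hs k₀ hk₀, hs _ (by push_cast; rw [ZMod.natCast_self, mul_zero, add_zero, hk₀])]

namespace odometer

variable {p : ℕ → ℕ}

variable (p) in
lemma isClosed : IsClosed (odometer p : Set (Π ℓ, ZMod (p ℓ))) := by
  show IsClosed {x : Π ℓ, ZMod (p ℓ) | ∀ ℓ h, ZMod.castHom h (ZMod (p ℓ)) (x (ℓ + 1)) = x ℓ}
  simp only [ofPred_forall]
  exact isClosed_iInter fun ℓ => isClosed_iInter fun h =>
    isClosed_eq (continuous_of_discreteTopology.comp (continuous_apply _)) (continuous_apply ℓ)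

lemma compactSpace (hp : ∀ ℓ, 0 < p ℓ) : CompactSpace (odometer p) := by
  have : ∀ ℓ, NeZero (p ℓ) := fun ℓ => ⟨(hp ℓ).ne'⟩
  exact isCompact_iff_compactSpace.mp (isClosed p).isCompact

lemma intCast_eq_of_le (hdvd : ∀ ℓ, p ℓ ∣ p (ℓ + 1)) {x : Π ℓ, ZMod (p ℓ)}
    (hx : x ∈ odometer p) {ℓ m : ℕ} (h : ℓ ≤ m) {k : ℤ}
    (hk : (k : ZMod (p m)) = x m) : (k : ZMod (p ℓ)) = x ℓ := by
  induction m, h using Nat.le_induction with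
  | base => exact hk
  | succ n _ ih => exact ih (by rw [← hx n (hdvd n), ← hk, map_intCast])

lemma coord_eq_of_le (hdvd : ∀ ℓ, p ℓ ∣ p (ℓ + 1)) {y z : odometer p} {ℓ m : ℕ} (h : ℓ ≤ m)
    (hyz : y.1 m = z.1 m) : y.1 ℓ = z.1 ℓ := by
  obtain ⟨k, hk⟩ := ZMod.intCast_surjective (z.1 m)
  rw [← intCast_eq_of_le hdvd y.2 h (hk.trans hyz.symm), intCast_eq_of_le hdvd z.2 h hk]

lemma exists_cylinder_subset (hdvd : ∀ ℓ, p ℓ ∣ p (ℓ + 1)) {O : Set (odometer p)}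
    (hO : IsOpen O) {z : odometer p} (hz : z ∈ O) :
    ∃ m, ∀ y : odometer p, y.1 m = z.1 m → y ∈ O := by
  obtain ⟨O', hO', rfl⟩ := isOpen_induced_iff.mp hO
  obtain ⟨I, u, hu, hsub⟩ := isOpen_pi_iff.mp hO' _ hz
  refine ⟨I.sup id, fun y hy => hsub fun i hi => ?_⟩
  rw [coord_eq_of_le hdvd (ℓ := i) (Finset.le_sup (f := id) hi) hy]
  exact (hu i hi).2

end odometer

lemma zsmul_odometerGen_coord (p : ℕ → ℕ) (k : ℤ) (ℓ : ℕ) :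
    (k • odometerGen p).1 ℓ = (k : ZMod (p ℓ)) := by
  simp [odometerGen, zsmul_eq_mul]

section Window

variable {ξ : ℤ → Fin 2} {p : ℕ → ℕ}

lemma eq_of_coord_mem_Aset (hdvd : ∀ ℓ, p ℓ ∣ p (ℓ + 1)) (x : odometer p) {ℓ m : ℕ}
    (h : ℓ ≤ m) {s t : Fin 2} (hs : x.1 ℓ ∈ Aset ξ p ℓ s) (ht : x.1 m ∈ Aset ξ p m t) :
    s = t := by
  obtain ⟨k, hkP, rfl, hkx⟩ := hs
  obtain ⟨k', -, rfl, hk'x⟩ := ht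
  exact (Per.apply_eq_of_intCast_eq hkP
    ((odometer.intCast_eq_of_le hdvd x.2 h hk'x).trans hkx.symm)).symm

lemma disjoint_Uset_Vset (hdvd : ∀ ℓ, p ℓ ∣ p (ℓ + 1)) : Disjoint (Uset ξ p) (Vset ξ p) := by
  refine Set.disjoint_left.mpr fun x hU hV => ?_
  obtain ⟨ℓ, hℓ⟩ := Set.mem_iUnion.mp hU
  obtain ⟨m, hm⟩ := Set.mem_iUnion.mp hV
  rcases le_total ℓ m with h | h
  · exact absurd (eq_of_coord_mem_Aset hdvd x h hℓ hm) (by decide)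
  · exact absurd (eq_of_coord_mem_Aset hdvd x h hm hℓ) (by decide)

lemma isOpen_Uset (ξ : ℤ → Fin 2) (p : ℕ → ℕ) : IsOpen (Uset ξ p) :=
  isOpen_iUnion fun ℓ =>
    (isOpen_discrete (Aset ξ p ℓ 1)).preimage ((continuous_apply ℓ).comp continuous_subtype_val)

lemma isOpen_Vset (ξ : ℤ → Fin 2) (p : ℕ → ℕ) : IsOpen (Vset ξ p) :=
  isOpen_iUnion fun ℓ =>
    (isOpen_discrete (Aset ξ p ℓ 0)).preimage ((continuous_apply ℓ).comp continuous_subtype_val)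

lemma disjoint_Wset_Vset (hdvd : ∀ ℓ, p ℓ ∣ p (ℓ + 1)) : Disjoint (Wset ξ p) (Vset ξ p) :=
  (disjoint_Uset_Vset hdvd).closure_left (isOpen_Vset ξ p)

lemma zsmul_odometerGen_mem_Vset (hps : IsPeriodStructure ξ p) {k : ℤ} (hk : ξ k = 0) :
    k • odometerGen p ∈ Vset ξ p := by
  obtain ⟨ℓ, hkP⟩ := hps.2.2 k
  exact Set.mem_iUnion.mpr ⟨ℓ, k, hkP, hk, (zsmul_odometerGen_coord p k ℓ).symm⟩

lemma interior_Wset_subset_Uset (hps : IsPeriodStructure ξ p) :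
    interior (Wset ξ p) ⊆ Uset ξ p := by
  intro z hz
  obtain ⟨m, hm⟩ := odometer.exists_cylinder_subset hps.2.1 isOpen_interior hz
  have hone : ∀ k : ℤ, (k : ZMod (p m)) = z.1 m → ξ k = 1 := by
    intro k hk
    by_contra hne
    have hkW : k • odometerGen p ∈ Wset ξ p :=
      interior_subset (hm _ ((zsmul_odometerGen_coord p k m).trans hk))
    exact Set.disjoint_left.mp (disjoint_Wset_Vset hps.2.1) hkW
      (zsmul_odometerGen_mem_Vset hps (by omega))
  obtain ⟨k₀, hk₀⟩ := ZMod.intCast_surjective (z.1 m)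
  exact Set.mem_iUnion.mpr ⟨m, k₀, Per.of_forall_intCast_eq hone hk₀, hone k₀ hk₀, hk₀⟩

lemma interior_Wset (hps : IsPeriodStructure ξ p) : interior (Wset ξ p) = Uset ξ p :=
  (interior_Wset_subset_Uset hps).antisymm (interior_maximal subset_closure (isOpen_Uset ξ p))

end Window

theorem toeplitz_window_proper_general (ξ : ℤ → Fin 2)
    (p : ℕ → ℕ) (hps : IsPeriodStructure ξ p) :
    IsCompact (Wset ξ p) ∧ interior (Wset ξ p) = Uset ξ p ∧
      Wset ξ p = closure (interior (Wset ξ p)) := by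
  have := odometer.compactSpace hps.1
  exact ⟨isClosed_closure.isCompact, interior_Wset hps, by rw [interior_Wset hps]; rfl⟩

/-- For a non-periodic Toeplitz sequence `ξ` with period structure
`(p ℓ)`, the window `W = cl U` in the associated odometer is compact, has interior
equal to `U`, and satisfies `W = cl (int W)`, i.e. it is a proper window. -/
theorem toeplitz_window_proper (ξ : ℤ → Fin 2) (hT : IsToeplitz ξ) (hNP : IsNonPeriodic ξ)
    (p : ℕ → ℕ) (hps : IsPeriodStructure ξ p) :
    IsCompact (Wset ξ p) ∧ interior (Wset ξ p) = Uset ξ p ∧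
      Wset ξ p = closure (interior (Wset ξ p)) :=
  toeplitz_window_proper_general ξ p hps
end
end

section
/- Let ξ : ℤ → {0,1} be a Toeplitz sequence with period structure (p_ℓ)_{ℓ≥1}, Ω the associated odometer with Haar probability measure μ, and U, V the sets constructed from ξ. Then μ(U ∪ V) = lim_{ℓ→∞} D(p_ℓ) = sup_{ℓ} D(p_ℓ). -/
open MeasureTheory Set Filter Topology

noncomputable section

/-! The union `U_ℓ ∪ V_ℓ` is the preimage, under the `ℓ`-th coordinate, of the residues
mod `p ℓ` of the `p ℓ`-skeleton. The coordinate map pushes the Haar probability measure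
forward to the uniform measure on `ℤ/p ℓ ℤ`, so `μ (U_ℓ ∪ V_ℓ) = D(p ℓ)`. Since a
`p ℓ`-periodic position is `p (ℓ+1)`-periodic, these sets increase with `ℓ`, and continuity
of measure from below gives `μ (U ∪ V) = lim D(p ℓ)`, the limit of an increasing sequence,
hence also its supremum. -/

instance AddSubgroup.instMeasurableAdd {G : Type*} [AddGroup G] [MeasurableSpace G]
    [MeasurableAdd G] (H : AddSubgroup G) : MeasurableAdd H where
  measurable_const_add c := ((measurable_const_add (c : G)).comp measurable_subtype_coe).subtype_mk
  measurable_add_const c := ((measurable_add_const (c : G)).comp measurable_subtype_coe).subtype_mk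

section UniformFibers

variable {G H : Type*} [AddGroup G] [MeasurableSpace G] [MeasurableAdd G]
  [AddGroup H] (μ : Measure G) [μ.IsAddLeftInvariant] {f : G →+ H}

theorem measure_preimage_singleton_eq_preimage_zero (hf : Function.Surjective f) (c : H) :
    μ (f ⁻¹' {c}) = μ (f ⁻¹' {0}) := by
  obtain ⟨g, rfl⟩ := hf c
  have hfibre : f ⁻¹' {f g} = (fun x => -g + x) ⁻¹' (f ⁻¹' {0}) := by
    ext x
    simp [neg_add_eq_zero, eq_comm (a := f x)]
  rw [hfibre, measure_preimage_add]

theorem measure_preimage_of_surjective [MeasurableSpace H] [MeasurableSingletonClass H]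
    [Finite H] [IsProbabilityMeasure μ] (hf : Function.Surjective f) (hfm : Measurable f)
    (A : Set H) :
    μ (f ⁻¹' A) = A.ncard / Nat.card H := by
  have hmap : μ.map f = μ (f ⁻¹' {0}) • Measure.count := by
    refine Measure.ext_iff_singleton.mpr fun c => ?_
    rw [Measure.map_apply hfm (measurableSet_singleton c),
      measure_preimage_singleton_eq_preimage_zero μ hf c]
    simp
  have hcount (B : Set H) : Measure.count B = B.ncard := by
    rw [Measure.count_apply_finite _ B.toFinite, Set.ncard_eq_toFinset_card]
  have hzero : μ (f ⁻¹' {0}) = (Nat.card H : ENNReal)⁻¹ := by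
    refine ENNReal.eq_inv_of_mul_eq_one_left ?_
    have huniv := congrArg (· Set.univ) hmap
    simp only [Measure.map_apply hfm MeasurableSet.univ, Set.preimage_univ, measure_univ,
      Measure.smul_apply, hcount, Set.ncard_univ, smul_eq_mul] at huniv
    exact huniv.symm
  have hA := congrArg (· A) hmap
  simp only [Measure.map_apply hfm (Set.toFinite A).measurableSet, Measure.smul_apply, hcount,
    hzero, smul_eq_mul] at hA
  rw [hA, div_eq_mul_inv, mul_comm]

end UniformFibers

section Skeleton

variable {ξ : ℤ → Fin 2}

theorem mem_Per_of_modEq {q : ℕ} {k m : ℤ} (hk : k ∈ Per ξ q) (hkm : k ≡ m [ZMOD q]) :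
    m ∈ Per ξ q := by
  obtain ⟨t, ht⟩ := Int.modEq_iff_dvd.mp hkm
  intro n
  rw [show m + n * q = k + (t + n) * q by linarith, show m = k + t * q by linarith, hk, hk]

theorem Per_subset_Per_of_dvd {a b : ℕ} (h : a ∣ b) : Per ξ a ⊆ Per ξ b := by
  obtain ⟨d, rfl⟩ := h
  intro k hk n
  rw [show k + n * ((a * d : ℕ) : ℤ) = k + (n * d) * a by push_cast; ring, hk]

def skelClasses (ξ : ℤ → Fin 2) (q : ℕ) : Set (ZMod q) := Int.cast '' Per ξ q

theorem intCast_mem_skelClasses {q : ℕ} {k : ℤ} :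
    (k : ZMod q) ∈ skelClasses ξ q ↔ k ∈ Per ξ q :=
  ⟨fun ⟨_, hm, hmk⟩ => mem_Per_of_modEq hm ((ZMod.intCast_eq_intCast_iff _ _ _).mp hmk),
    fun hk => ⟨k, hk, rfl⟩⟩

theorem ncard_skelClasses {q : ℕ} (hq : 0 < q) :
    (skelClasses ξ q).ncard = (Per ξ q ∩ Ico (0 : ℤ) q).ncard := by
  have hq' : (0 : ℤ) < q := by exact_mod_cast hq
  have hrep : skelClasses ξ q = Int.cast '' (Per ξ q ∩ Ico (0 : ℤ) q) := by
    refine (image_mono inter_subset_left).antisymm' ?_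
    rintro _ ⟨k, hk, rfl⟩
    have hmod : k % q ≡ k [ZMOD q] := Int.mod_modEq k q
    refine ⟨k % q, ⟨mem_Per_of_modEq hk hmod.symm, ?_⟩,
      (ZMod.intCast_eq_intCast_iff _ _ _).mpr hmod⟩
    exact ⟨Int.emod_nonneg k hq'.ne', Int.emod_lt_of_pos k hq'⟩
  rw [hrep]
  refine InjOn.ncard_image fun a ha b hb hab => ?_
  have hmod : a % q = b % q := (ZMod.intCast_eq_intCast_iff _ _ _).mp hab
  rwa [Int.emod_eq_of_lt ha.2.1 ha.2.2, Int.emod_eq_of_lt hb.2.1 hb.2.2] at hmod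

theorem Aset_union_Aset (p : ℕ → ℕ) (ℓ : ℕ) :
    Aset ξ p ℓ 0 ∪ Aset ξ p ℓ 1 = skelClasses ξ (p ℓ) := by
  ext c
  constructor
  · rintro (⟨k, hk, -, rfl⟩ | ⟨k, hk, -, rfl⟩) <;> exact ⟨k, hk, rfl⟩
  · rintro ⟨k, hk, rfl⟩
    obtain h | h : ξ k = 0 ∨ ξ k = 1 := by omega
    exacts [Or.inl ⟨k, hk, h, rfl⟩, Or.inr ⟨k, hk, h, rfl⟩]

end Skeleton

section Odometer

variable (p : ℕ → ℕ)

def odometerCoord (ℓ : ℕ) : odometer p →+ ZMod (p ℓ) :=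
  (Pi.evalAddMonoidHom _ ℓ).comp (odometer p).subtype

theorem odometerCoord_surjective (ℓ : ℕ) : Function.Surjective (odometerCoord p ℓ) := by
  intro c
  obtain ⟨n, rfl⟩ := ZMod.intCast_surjective c
  exact ⟨n • odometerGen p, by simp [odometerCoord, odometerGen]⟩

theorem measurable_odometerCoord (ℓ : ℕ) : Measurable (odometerCoord p ℓ) :=
  (measurable_pi_apply ℓ).comp measurable_subtype_coe

theorem odometerCoord_mem_skelClasses_succ {ξ : ℤ → Fin 2} {ℓ : ℕ} (hdvd : p ℓ ∣ p (ℓ + 1))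
    {x : odometer p} (hx : odometerCoord p ℓ x ∈ skelClasses ξ (p ℓ)) :
    odometerCoord p (ℓ + 1) x ∈ skelClasses ξ (p (ℓ + 1)) := by
  obtain ⟨m, hm⟩ := ZMod.intCast_surjective (odometerCoord p (ℓ + 1) x)
  have hproj : (m : ZMod (p ℓ)) = odometerCoord p ℓ x := by
    rw [← map_intCast (ZMod.castHom hdvd (ZMod (p ℓ))), hm]
    exact x.2 ℓ hdvd
  rw [← hproj, intCast_mem_skelClasses] at hx
  rw [← hm, intCast_mem_skelClasses]
  exact Per_subset_Per_of_dvd hdvd hx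

end Odometer

def skelCylinder (ξ : ℤ → Fin 2) (p : ℕ → ℕ) (ℓ : ℕ) : Set (odometer p) :=
  odometerCoord p ℓ ⁻¹' skelClasses ξ (p ℓ)

section Cylinders

variable (ξ : ℤ → Fin 2) {p : ℕ → ℕ}

theorem Uset_union_Vset : Uset ξ p ∪ Vset ξ p = ⋃ ℓ, skelCylinder ξ p ℓ := by
  rw [Uset, Vset, ← iUnion_union_distrib]
  refine iUnion_congr fun ℓ => ?_
  rw [skelCylinder, ← Aset_union_Aset, preimage_union, union_comm]
  rfl

theorem monotone_skelCylinder (hdvd : ∀ ℓ, p ℓ ∣ p (ℓ + 1)) : Monotone (skelCylinder ξ p) :=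
  monotone_nat_of_le_succ fun ℓ _ hx => odometerCoord_mem_skelClasses_succ p (hdvd ℓ) hx

theorem measure_skelCylinder_toReal (μ : Measure (odometer p)) [μ.IsAddLeftInvariant]
    [IsProbabilityMeasure μ] {ℓ : ℕ} (hp : 0 < p ℓ) :
    (μ (skelCylinder ξ p ℓ)).toReal = skelDensity ξ (p ℓ) := by
  have : NeZero (p ℓ) := ⟨hp.ne'⟩
  rw [skelCylinder, measure_preimage_of_surjective μ (odometerCoord_surjective p ℓ)
    (measurable_odometerCoord p ℓ), ncard_skelClasses hp, Nat.card_zmod, ENNReal.toReal_div]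
  simp [skelDensity]

end Cylinders

theorem toeplitz_measure_UV_general (ξ : ℤ → Fin 2)
    (p : ℕ → ℕ) (hps : IsPeriodStructure ξ p)
    (μ : Measure (odometer p)) (hμ : μ.IsAddHaarMeasure) (hμ1 : IsProbabilityMeasure μ) :
    ∃ L : ℝ, Tendsto (fun ℓ => skelDensity ξ (p ℓ)) atTop (𝓝 L) ∧
      μ (Uset ξ p ∪ Vset ξ p) = ENNReal.ofReal L ∧
      L = ⨆ ℓ, skelDensity ξ (p ℓ) := by
  obtain ⟨hpos, hdvd, -⟩ := hps
  have hD (ℓ : ℕ) : skelDensity ξ (p ℓ) = (μ (skelCylinder ξ p ℓ)).toReal :=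
    (measure_skelCylinder_toReal ξ μ (hpos ℓ)).symm
  have hmono := monotone_skelCylinder ξ hdvd
  have hlim : Tendsto (fun ℓ => skelDensity ξ (p ℓ)) atTop
      (𝓝 (μ (Uset ξ p ∪ Vset ξ p)).toReal) := by
    simp only [hD, Uset_union_Vset]
    exact (ENNReal.tendsto_toReal (measure_ne_top _ _)).comp (tendsto_measure_iUnion_atTop hmono)
  have hDmono : Monotone fun ℓ => skelDensity ξ (p ℓ) := fun a b hab => by
    simp only [hD]
    exact ENNReal.toReal_mono (measure_ne_top _ _) (measure_mono (hmono hab))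
  exact ⟨_, hlim, (ENNReal.ofReal_toReal (measure_ne_top _ _)).symm,
    (isLUB_of_tendsto_atTop hDmono hlim).ciSup_eq.symm⟩

/-- For a Toeplitz sequence `ξ` with period structure `(p ℓ)` and
the Haar probability measure `μ` of the associated odometer:
`μ (U ∪ V) = lim_ℓ D(p ℓ) = sup_ℓ D(p ℓ)`. -/
theorem toeplitz_measure_UV (ξ : ℤ → Fin 2) (hT : IsToeplitz ξ)
    (p : ℕ → ℕ) (hps : IsPeriodStructure ξ p)
    (μ : Measure (odometer p)) (hμ : μ.IsAddHaarMeasure) (hμ1 : IsProbabilityMeasure μ) :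
    ∃ L : ℝ, Tendsto (fun ℓ => skelDensity ξ (p ℓ)) atTop (𝓝 L) ∧
      μ (Uset ξ p ∪ Vset ξ p) = ENNReal.ofReal L ∧
      L = ⨆ ℓ, skelDensity ξ (p ℓ) :=
  toeplitz_measure_UV_general ξ p hps μ hμ hμ1
end
end
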